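/- arXiv:2205.04785 — 3 statements merged into one kernel-verified Lean document; each statement's English description precedes it below -/
import Mathlib

section
/- A prefix transposition on a permutation can create at most two new adjacencies, where an adjacency of a permutation π of {0,1,...,n-1} is a position i with π(i+1) = π(i) + 1 (mod n). -/
def adjacencies (n : ℕ) (l : List ℕ) : ℕ :=
  (List.range (l.length - 1)).countP (fun i => l.getD (i+1) 0 == (l.getD i 0 + 1) % n)

def breakpoints (n : ℕ) (l : List ℕ) : ℕ :=
  (List.range (l.length - 1)).countP (fun i => !(l.getD (i+1) 0 == (l.getD i 0 + 1) % n))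

/-- Prefix transposition α(i,j): move the prefix (π₁,...,π_{i-1}) to between
π_{j-1} and π_j, yielding (π_i,...,π_{j-1},π₁,...,π_{i-1},π_j,...). -/
def prefixTrans (i j : ℕ) (l : List ℕ) : List ℕ :=
  ((l.drop (i-1)).take (j-i)) ++ l.take (i-1) ++ l.drop (j-1)

/-!
Cutting `π` as `A ++ B ++ C`, the prefix transposition produces `B ++ A ++ C`. Counting
adjacencies is additive over a concatenation up to the single pair straddling the cut, so
`B ++ A ++ C` has at most the adjacencies inside `A`, `B`, `C` plus two at its cuts, and
`A ++ B ++ C` has at least those inside `A`, `B`, `C`.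
-/

namespace List

variable {α : Type*} (r : α → α → Bool)

def countConsecutive : List α → ℕ
  | a :: b :: t => (if r a b then 1 else 0) + countConsecutive (b :: t)
  | _ => 0

@[simp]
lemma countConsecutive_nil : countConsecutive r [] = 0 := rfl

@[simp]
lemma countConsecutive_singleton (a : α) : countConsecutive r [a] = 0 := rfl

lemma countConsecutive_cons_cons (a b : α) (t : List α) :
    countConsecutive r (a :: b :: t) = (if r a b then 1 else 0) + countConsecutive r (b :: t) :=
  rfl

lemma countConsecutive_append_le :
    ∀ X Y : List α, countConsecutive r (X ++ Y) ≤ countConsecutive r X + countConsecutive r Y + 1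
  | [], _ => by simp
  | [_], [] => by simp
  | [a], b :: t => by
    rw [singleton_append, countConsecutive_cons_cons, countConsecutive_singleton]
    split <;> omega
  | a :: b :: t, Y => by
    have ih := countConsecutive_append_le (b :: t) Y
    rw [cons_append, cons_append, countConsecutive_cons_cons, countConsecutive_cons_cons,
      ← cons_append]
    omega

lemma countConsecutive_le_append :
    ∀ X Y : List α, countConsecutive r X + countConsecutive r Y ≤ countConsecutive r (X ++ Y)
  | [], _ => by simp
  | [_], [] => by simp
  | [a], b :: t => by
    rw [singleton_append, countConsecutive_cons_cons, countConsecutive_singleton]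
    omega
  | a :: b :: t, Y => by
    have ih := countConsecutive_le_append (b :: t) Y
    rw [cons_append, cons_append, countConsecutive_cons_cons, countConsecutive_cons_cons,
      ← cons_append]
    omega

lemma countConsecutive_swap_append_le (A B C : List α) :
    countConsecutive r (B ++ A ++ C) ≤ countConsecutive r (A ++ B ++ C) + 2 := by
  have h₁ := countConsecutive_append_le r B (A ++ C)
  have h₂ := countConsecutive_append_le r A C
  have h₃ := countConsecutive_le_append r A (B ++ C)
  have h₄ := countConsecutive_le_append r B C
  simp only [append_assoc]
  omega

end List

lemma adjacencies_eq_countConsecutive (n : ℕ) :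
    ∀ l : List ℕ, adjacencies n l = l.countConsecutive (fun a b => b == (a + 1) % n)
  | [] => rfl
  | [_] => rfl
  | a :: b :: t => by
    have ih := adjacencies_eq_countConsecutive n (b :: t)
    unfold adjacencies at ih ⊢
    rw [List.countConsecutive_cons_cons, ← ih, List.length_cons, List.length_cons,
      Nat.add_sub_cancel, List.range_succ_eq_map, List.countP_cons, List.countP_map]
    simp only [Function.comp_def, List.getD_cons_succ, List.getD_cons_zero, Nat.add_sub_cancel]
    omega

lemma exists_eq_append_append_and_prefixTrans_eq {i j : ℕ} (hi : 1 ≤ i) (hij : i ≤ j)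
    (l : List ℕ) : ∃ A B C, l = A ++ B ++ C ∧ prefixTrans i j l = B ++ A ++ C := by
  refine ⟨l.take (i - 1), (l.drop (i - 1)).take (j - i), l.drop (j - 1), ?_, rfl⟩
  have hC : l.drop (j - 1) = (l.drop (i - 1)).drop (j - i) := by
    rw [List.drop_drop, show i - 1 + (j - i) = j - 1 by omega]
  rw [List.append_assoc, hC, List.take_append_drop, List.take_append_drop]

theorem prefixTrans_adjacencies_le_general (n : ℕ) (π : List ℕ)
    (i j : ℕ) (hi : 1 ≤ i) (hij : i < j) :
    adjacencies n (prefixTrans i j π) ≤ adjacencies n π + 2 := by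
  obtain ⟨A, B, C, hsplit, htrans⟩ := exists_eq_append_append_and_prefixTrans_eq hi hij.le π
  rw [htrans, hsplit, adjacencies_eq_countConsecutive, adjacencies_eq_countConsecutive]
  exact List.countConsecutive_swap_append_le _ A B C

/-- A prefix transposition can create at most two new adjacencies. -/
theorem prefixTrans_adjacencies_le (n : ℕ) (π : List ℕ)
    (hπ : π.Perm (List.range n)) (i j : ℕ) (hi : 1 ≤ i) (hij : i < j)
    (hj : j ≤ n) :
    adjacencies n (prefixTrans i j π) ≤ adjacencies n π + 2 :=
  prefixTrans_adjacencies_le_general n π i j hi hij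
end

section
/- If a prefix transposition creating two adjacencies (a 'double') exists on a reduced permutation, it is unique. -/
/-!
Writing `π = A B C` with `A = π₁ ⋯ π_{i-1}` and `B = π_i ⋯ π_{j-1}`, the prefix transposition
`α(i,j)` produces `B A C`; every neighbouring pair except the two junctions `B|A` and `A|C` was
already neighbouring in `π`. So on a reduced permutation a double must create adjacencies at both
junctions: `π₁ ≡ π_{j-1} + 1` and `π_j ≡ π_{i-1} + 1 (mod n)`. In a permutation of `{0, …, n-1}`
each value has exactly one predecessor mod `n`, so the first congruence determines `j`, and then
the second determines `i`.
-/

def HasAdjacencyAt (n : ℕ) (l : List ℕ) (k : ℕ) : Prop :=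
  l.getD (k + 1) 0 = (l.getD k 0 + 1) % n

section Adjacencies

variable {n : ℕ} {l : List ℕ}

theorem not_hasAdjacencyAt_of_adjacencies_eq_zero (h : adjacencies n l = 0) {k : ℕ}
    (hk : k + 1 < l.length) : ¬ HasAdjacencyAt n l k := by
  have := List.countP_eq_zero.mp h k (List.mem_range.mpr (by omega))
  simpa [HasAdjacencyAt] using this

theorem adjacencies_le_one {r : ℕ}
    (h : ∀ k, k + 1 < l.length → HasAdjacencyAt n l k → k = r) : adjacencies n l ≤ 1 := by
  calc adjacencies n l ≤ (List.range (l.length - 1)).countP (· == r) := by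
        refine List.countP_mono_left fun k hk hadj => ?_
        have := h k (by have := List.mem_range.mp hk; omega) (beq_iff_eq.mp hadj)
        simpa using this
    _ = (List.range (l.length - 1)).count r := rfl
    _ ≤ 1 := List.nodup_iff_count_le_one.mp List.nodup_range r

theorem hasAdjacencyAt_of_two_le_adjacencies {p q : ℕ} (h : 2 ≤ adjacencies n l)
    (hpq : ∀ k, k + 1 < l.length → HasAdjacencyAt n l k → k = p ∨ k = q) :
    HasAdjacencyAt n l p ∧ HasAdjacencyAt n l q := by
  by_contra hnot
  have key : ∃ r, ∀ k, k + 1 < l.length → HasAdjacencyAt n l k → k = r := by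
    rcases not_and_or.mp hnot with hp | hq
    · exact ⟨q, fun k hk hadj => (hpq k hk hadj).resolve_left (by rintro rfl; exact hp hadj)⟩
    · exact ⟨p, fun k hk hadj => (hpq k hk hadj).resolve_right (by rintro rfl; exact hq hadj)⟩
  obtain ⟨r, hr⟩ := key
  have := adjacencies_le_one hr
  omega

end Adjacencies

section PrefixTrans

variable {i j : ℕ} {l : List ℕ}

theorem prefixTrans_one (j : ℕ) (l : List ℕ) : prefixTrans 1 j l = l := by
  simp [prefixTrans]

variable (hi : 1 ≤ i) (hij : i < j) (hj : j ≤ l.length)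
include hi hij hj

theorem length_prefixTrans : (prefixTrans i j l).length = l.length := by
  simp only [prefixTrans, List.length_append, List.length_take, List.length_drop]
  omega

theorem getD_prefixTrans_of_lt {p : ℕ} (hp : p < j - i) :
    (prefixTrans i j l).getD p 0 = l.getD (i - 1 + p) 0 := by
  simp only [prefixTrans, List.getD_eq_getElem?_getD, List.getElem?_append,
    List.length_append, List.length_take, List.length_drop, List.getElem?_take,
    List.getElem?_drop, Nat.min_eq_left (show j - i ≤ l.length - (i - 1) by omega)]
  rw [if_pos (by omega), if_pos hp, if_pos hp]

theorem getD_prefixTrans_of_le_of_lt {p : ℕ} (hp₁ : j - i ≤ p) (hp₂ : p < j - 1) :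
    (prefixTrans i j l).getD p 0 = l.getD (p - (j - i)) 0 := by
  simp only [prefixTrans, List.getD_eq_getElem?_getD, List.getElem?_append,
    List.length_append, List.length_take, List.length_drop, List.getElem?_take,
    List.getElem?_drop, Nat.min_eq_left (show j - i ≤ l.length - (i - 1) by omega),
    Nat.min_eq_left (show i - 1 ≤ l.length by omega)]
  rw [if_pos (by omega), if_neg (by omega), if_pos (by omega)]

theorem getD_prefixTrans_of_le {p : ℕ} (hp : j - 1 ≤ p) :
    (prefixTrans i j l).getD p 0 = l.getD p 0 := by
  simp only [prefixTrans, List.getD_eq_getElem?_getD, List.getElem?_append,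
    List.length_append, List.length_take, List.length_drop, List.getElem?_drop,
    Nat.min_eq_left (show j - i ≤ l.length - (i - 1) by omega),
    Nat.min_eq_left (show i - 1 ≤ l.length by omega)]
  rw [if_neg (by omega), show j - 1 + (p - (j - i + (i - 1))) = p by omega]

end PrefixTrans

section Double

variable {n i j : ℕ} {l : List ℕ}

theorem two_le_of_two_le_adjacencies_prefixTrans (hred : adjacencies n l = 0) (hi : 1 ≤ i)
    (hd : 2 ≤ adjacencies n (prefixTrans i j l)) : 2 ≤ i := by
  by_contra hi2
  obtain rfl : i = 1 := by omega
  rw [prefixTrans_one, hred] at hd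
  omega

variable (hi : 2 ≤ i) (hij : i < j) (hj : j ≤ l.length)
include hi hij hj

theorem eq_or_eq_of_hasAdjacencyAt_prefixTrans (hred : adjacencies n l = 0) {k : ℕ}
    (hk : k + 1 < l.length) (h : HasAdjacencyAt n (prefixTrans i j l) k) :
    k = j - i - 1 ∨ k = j - 2 := by
  have hi₁ : 1 ≤ i := by omega
  have hno_adj : ∀ m, m + 1 < l.length → ¬ HasAdjacencyAt n l m :=
    fun m hm => not_hasAdjacencyAt_of_adjacencies_eq_zero hred hm
  unfold HasAdjacencyAt at h
  by_contra hne
  rcases (show k + 1 < j - i ∨ (j - i ≤ k ∧ k + 1 < j - 1) ∨ j - 1 ≤ k by omega)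
    with hB | hA | hC
  · rw [getD_prefixTrans_of_lt hi₁ hij hj hB, getD_prefixTrans_of_lt hi₁ hij hj (by omega)] at h
    exact hno_adj (i - 1 + k) (by omega) h
  · rw [getD_prefixTrans_of_le_of_lt hi₁ hij hj (by omega) hA.2,
      getD_prefixTrans_of_le_of_lt hi₁ hij hj hA.1 (by omega)] at h
    exact hno_adj (k - (j - i)) (by omega)
      (by rwa [HasAdjacencyAt, show k - (j - i) + 1 = k + 1 - (j - i) by omega])
  · rw [getD_prefixTrans_of_le hi₁ hij hj (by omega), getD_prefixTrans_of_le hi₁ hij hj hC] at h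
    exact hno_adj k hk h

theorem getD_zero_eq_of_hasAdjacencyAt_prefixTrans
    (h : HasAdjacencyAt n (prefixTrans i j l) (j - i - 1)) :
    l.getD 0 0 = (l.getD (j - 2) 0 + 1) % n := by
  unfold HasAdjacencyAt at h
  rwa [show j - i - 1 + 1 = j - i by omega,
    getD_prefixTrans_of_le_of_lt (by omega) hij hj le_rfl (by omega),
    getD_prefixTrans_of_lt (by omega) hij hj (by omega), Nat.sub_self,
    show i - 1 + (j - i - 1) = j - 2 by omega] at h

theorem getD_sub_one_eq_of_hasAdjacencyAt_prefixTrans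
    (h : HasAdjacencyAt n (prefixTrans i j l) (j - 2)) :
    l.getD (j - 1) 0 = (l.getD (i - 2) 0 + 1) % n := by
  unfold HasAdjacencyAt at h
  rwa [show j - 2 + 1 = j - 1 by omega, getD_prefixTrans_of_le (by omega) hij hj le_rfl,
    getD_prefixTrans_of_le_of_lt (by omega) hij hj (by omega) (by omega),
    show j - 2 - (j - i) = i - 2 by omega] at h

theorem junctions_of_two_le_adjacencies_prefixTrans (hred : adjacencies n l = 0)
    (hd : 2 ≤ adjacencies n (prefixTrans i j l)) :
    l.getD 0 0 = (l.getD (j - 2) 0 + 1) % n ∧ l.getD (j - 1) 0 = (l.getD (i - 2) 0 + 1) % n := by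
  obtain ⟨hfirst, hlast⟩ := hasAdjacencyAt_of_two_le_adjacencies hd fun k hk h =>
    eq_or_eq_of_hasAdjacencyAt_prefixTrans hi hij hj hred
      (by rwa [length_prefixTrans (by omega) hij hj] at hk) h
  exact ⟨getD_zero_eq_of_hasAdjacencyAt_prefixTrans hi hij hj hfirst,
    getD_sub_one_eq_of_hasAdjacencyAt_prefixTrans hi hij hj hlast⟩

end Double

theorem eq_of_succ_getD_mod_eq {n : ℕ} {π : List ℕ} (hπ : π.Perm (List.range n)) {k k' : ℕ}
    (hk : k < n) (hk' : k' < n) (h : (π.getD k 0 + 1) % n = (π.getD k' 0 + 1) % n) :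
    k = k' := by
  have hlen : π.length = n := by simp [hπ.length_eq]
  have hval : ∀ m < n, π.getD m 0 < n := fun m hm => by
    rw [List.getD_eq_getElem _ _ (by omega)]
    exact List.mem_range.mp (hπ.subset (List.getElem_mem _))
  have hentry : π.getD k 0 = π.getD k' 0 := by
    have := Nat.ModEq.add_right_cancel' 1 h
    rwa [Nat.ModEq, Nat.mod_eq_of_lt (hval k hk), Nat.mod_eq_of_lt (hval k' hk')] at this
  rw [List.getD_eq_getElem _ _ (by omega), List.getD_eq_getElem _ _ (by omega)] at hentry
  exact (hπ.nodup_iff.mpr List.nodup_range).getElem_inj_iff.mp hentry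

/-- On a reduced permutation, a double (a prefix transposition creating two
adjacencies), if it exists, is unique. -/
theorem double_unique (n : ℕ) (π : List ℕ) (hπ : π.Perm (List.range n))
    (hred : adjacencies n π = 0)
    (i j i' j' : ℕ)
    (hi : 1 ≤ i) (hij : i < j) (hj : j ≤ n)
    (hi' : 1 ≤ i') (hij' : i' < j') (hj' : j' ≤ n)
    (hd : 2 ≤ adjacencies n (prefixTrans i j π))
    (hd' : 2 ≤ adjacencies n (prefixTrans i' j' π)) :
    i = i' ∧ j = j' := by
  have hlen : π.length = n := by simp [hπ.length_eq]
  have hi₂ := two_le_of_two_le_adjacencies_prefixTrans hred hi hd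
  have hi₂' := two_le_of_two_le_adjacencies_prefixTrans hred hi' hd'
  obtain ⟨hfirst, hlast⟩ :=
    junctions_of_two_le_adjacencies_prefixTrans hi₂ hij (hlen ▸ hj) hred hd
  obtain ⟨hfirst', hlast'⟩ :=
    junctions_of_two_le_adjacencies_prefixTrans hi₂' hij' (hlen ▸ hj') hred hd'
  obtain rfl : j = j' := by
    have := eq_of_succ_getD_mod_eq hπ (k := j - 2) (k' := j' - 2) (by omega) (by omega)
      (hfirst.symm.trans hfirst')
    omega
  have := eq_of_succ_getD_mod_eq hπ (k := i - 2) (k' := i' - 2) (by omega) (by omega)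
    (hlast.symm.trans hlast')
  exact ⟨by omega, rfl⟩
end

section
/- Sorting a permutation π ∈ S_n by prefix transpositions is equivalent in cost to sorting its reduction: if π has an adjacency (a pair of consecutive positions with consecutive values), then the prefix transposition distance of π to the identity equals the prefix transposition distance of the reduced permutation π' ∈ S_{n-1} obtained by merging that adjacent pair into a single symbol. -/
/-- `reachableIn d l m` : `l` can be transformed into `m` by exactly `d`
prefix transpositions (insertion at the very end allowed, i.e. j ≤ n+1). -/
def reachableIn : ℕ → List ℕ → List ℕ → Prop
  | 0, l, m => l = m
  | d+1, l, m => ∃ i j, 1 ≤ i ∧ i < j ∧ j ≤ l.length + 1 ∧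
      reachableIn d (prefixTrans i j l) m

/-!
Deleting the symbol `v + 1` and renumbering (`collapse v`), and its inverse, splitting `v` into
`v, v + 1` and renumbering (`expand v`), are letter-by-letter substitutions `l ↦ l.flatMap f`.
Any such substitution maps a prefix transposition `X ++ Y ++ Z ↦ Y ++ X ++ Z` to a prefix
transposition or to the identity, so it transports a sorting sequence into one that is no longer.
Applied to `collapse v` and `expand v`, which exchange `π` with its reduction and the identity of
`S_n` with that of `S_{n-1}`, this gives both inequalities.
-/

theorem prefixTrans_append (X Y Z : List ℕ) :
    prefixTrans (X.length + 1) ((X ++ Y).length + 1) (X ++ Y ++ Z) = Y ++ X ++ Z := by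
  simp [prefixTrans, List.drop_append]

theorem reachableIn_succ_iff {d : ℕ} {l m : List ℕ} :
    reachableIn (d + 1) l m ↔
      ∃ X Y Z, l = X ++ Y ++ Z ∧ Y ≠ [] ∧ reachableIn d (Y ++ X ++ Z) m := by
  constructor
  · rintro ⟨i, j, hi, hij, hj, h⟩
    refine ⟨l.take (i - 1), (l.drop (i - 1)).take (j - i), l.drop (j - 1), ?_, ?_, h⟩
    · have : j - 1 = i - 1 + (j - i) := by omega
      rw [this, ← List.drop_drop, List.append_assoc, List.take_append_drop, List.take_append_drop]
    · simp only [ne_eq, List.take_eq_nil_iff, List.drop_eq_nil_iff]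
      omega
  · rintro ⟨X, Y, Z, rfl, hY, h⟩
    have hY_pos : 0 < Y.length := List.length_pos_iff.mpr hY
    refine ⟨X.length + 1, (X ++ Y).length + 1, le_add_self, ?_, ?_, ?_⟩
    · simp only [List.length_append]; omega
    · simp only [List.length_append]; omega
    · rwa [prefixTrans_append]

theorem exists_reachableIn_flatMap_le (f : ℕ → List ℕ) {d : ℕ} {l m : List ℕ}
    (h : reachableIn d l m) : ∃ d' ≤ d, reachableIn d' (l.flatMap f) (m.flatMap f) := by
  induction d generalizing l with
  | zero => exact ⟨0, le_rfl, congrArg (List.flatMap f) h⟩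
  | succ d ih =>
    obtain ⟨X, Y, Z, rfl, -, h⟩ := reachableIn_succ_iff.mp h
    obtain ⟨d', hd', h'⟩ := ih h
    simp only [List.flatMap_append] at h' ⊢
    by_cases hY : Y.flatMap f = []
    · refine ⟨d', by omega, ?_⟩
      simpa only [hY, List.append_nil, List.nil_append] using h'
    · exact ⟨d' + 1, by omega, reachableIn_succ_iff.mpr ⟨_, _, _, rfl, hY, h'⟩⟩

section Reduction

variable (v : ℕ)

def shiftDown (x : ℕ) : ℕ := if v < x then x - 1 else x

def collapse (x : ℕ) : List ℕ := if x = v + 1 then [] else [shiftDown v x]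

def expand (x : ℕ) : List ℕ := if x = v then [v, v + 1] else if v < x then [x + 1] else [x]

theorem flatMap_collapse_range (n : ℕ) :
    (List.range n).flatMap (collapse v) = List.range (if v + 1 < n then n - 1 else n) := by
  induction n with
  | zero => rfl
  | succ n ih =>
    rw [List.range_succ, List.flatMap_append, ih, List.flatMap_singleton]
    unfold collapse shiftDown
    rcases lt_trichotomy n (v + 1) with h | rfl | h
    · simp [h.ne, show ¬ v + 1 < n by omega, show ¬ v < n by omega,
        show ¬ v + 1 < n + 1 by omega, List.range_succ]
    · simp
    · obtain ⟨k, rfl⟩ : ∃ k, n = k + 1 := ⟨n - 1, by omega⟩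
      simp [show k ≠ v by omega, show v < k + 1 by omega, h, show v + 1 < k + 2 by omega,
        List.range_succ]

theorem flatMap_expand_range (n : ℕ) :
    (List.range n).flatMap (expand v) = List.range (if v < n then n + 1 else n) := by
  induction n with
  | zero => rfl
  | succ n ih =>
    rw [List.range_succ, List.flatMap_append, ih, List.flatMap_singleton]
    unfold expand
    rcases lt_trichotomy n v with h | rfl | h
    · simp [h.ne, show ¬ v < n by omega, show ¬ v < n + 1 by omega, List.range_succ]
    · simp [List.range_succ]
    · simp [h.ne', h, show v < n + 1 by omega, List.range_succ]

theorem flatMap_collapse_of_not_mem {l : List ℕ} (h : v + 1 ∉ l) :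
    l.flatMap (collapse v) = l.map (shiftDown v) := by
  rw [List.map_eq_flatMap]
  exact List.flatMap_congr fun x hx => if_neg (ne_of_mem_of_not_mem hx h)

theorem expand_shiftDown {x : ℕ} (h₀ : x ≠ v) (h₁ : x ≠ v + 1) :
    expand v (shiftDown v x) = [x] := by
  unfold expand shiftDown
  split_ifs <;> grind

theorem flatMap_expand_map_shiftDown {l : List ℕ} (h₀ : v ∉ l) (h₁ : v + 1 ∉ l) :
    (l.map (shiftDown v)).flatMap (expand v) = l := by
  rw [List.flatMap_map]
  conv_rhs => rw [← List.flatMap_singleton' l]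
  exact List.flatMap_congr fun x hx =>
    expand_shiftDown v (ne_of_mem_of_not_mem hx h₀) (ne_of_mem_of_not_mem hx h₁)

theorem flatMap_collapse_append_cons_cons {A B : List ℕ} (h : (A ++ v :: (v + 1) :: B).Nodup) :
    (A ++ v :: (v + 1) :: B).flatMap (collapse v) = (A ++ v :: B).map (shiftDown v) := by
  have hA : v + 1 ∉ A := by grind
  have hB : v + 1 ∉ B := by grind
  simp [flatMap_collapse_of_not_mem v hA, flatMap_collapse_of_not_mem v hB, collapse, shiftDown]

theorem flatMap_expand_map_append_cons {A B : List ℕ} (h : (A ++ v :: (v + 1) :: B).Nodup) :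
    ((A ++ v :: B).map (shiftDown v)).flatMap (expand v) = A ++ v :: (v + 1) :: B := by
  have hA₀ : v ∉ A := by grind
  have hA₁ : v + 1 ∉ A := by grind
  have hB₀ : v ∉ B := by grind
  have hB₁ : v + 1 ∉ B := by grind
  simp [flatMap_expand_map_shiftDown v hA₀ hA₁, flatMap_expand_map_shiftDown v hB₀ hB₁,
    expand, shiftDown]

end Reduction

theorem List.exists_eq_append_cons_cons_of_lt {α : Type*} (l : List α) (d : α) {i : ℕ}
    (hi : i + 1 < l.length) :
    ∃ A B, l = A ++ l.getD i d :: l.getD (i + 1) d :: B ∧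
      l.eraseIdx (i + 1) = A ++ l.getD i d :: B := by
  have hi' : i < l.length := by omega
  rw [List.getD_eq_getElem _ _ hi, List.getD_eq_getElem _ _ hi']
  refine ⟨l.take i, l.drop (i + 2), ?_, ?_⟩
  · conv_lhs => rw [← List.take_append_drop i l, List.drop_eq_getElem_cons hi',
      List.drop_eq_getElem_cons hi]
  · rw [List.eraseIdx_eq_take_drop_succ, List.take_succ_eq_append_getElem hi', List.append_assoc,
      List.singleton_append]

/-- Sorting a permutation by prefix transpositions costs exactly the same as
sorting its reduction obtained by merging an adjacency into one symbol. -/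
theorem distance_eq_reduced (n : ℕ) (π : List ℕ)
    (hπ : π.Perm (List.range n)) (i : ℕ) (hi : i + 1 < n)
    (hadj : π.getD (i+1) 0 = π.getD i 0 + 1) :
    sInf {d : ℕ | reachableIn d π (List.range n)} =
      sInf {d : ℕ | reachableIn d
        ((π.eraseIdx (i+1)).map (fun x => if π.getD i 0 < x then x - 1 else x))
        (List.range (n - 1))} := by
  have hlen : π.length = n := by simpa using hπ.length_eq
  obtain ⟨A, B, hsplit, herase⟩ := π.exists_eq_append_cons_cons_of_lt 0 (hlen ▸ hi)
  set v := π.getD i 0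
  rw [hadj] at hsplit
  have hnd : (A ++ v :: (v + 1) :: B).Nodup := hsplit ▸ hπ.nodup_iff.mpr List.nodup_range
  have hv : v + 1 < n := List.mem_range.mp (hπ.subset (hsplit ▸ by simp))
  change _ = sInf {d | reachableIn d ((π.eraseIdx (i + 1)).map (shiftDown v)) _}
  rw [herase]
  apply csInf_eq_csInf_of_forall_exists_le
  · intro d hd
    obtain ⟨d', hd', h⟩ := exists_reachableIn_flatMap_le (collapse v) hd
    rw [hsplit, flatMap_collapse_append_cons_cons v hnd, flatMap_collapse_range, if_pos hv] at h
    exact ⟨d', h, hd'⟩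
  · intro d hd
    obtain ⟨d', hd', h⟩ := exists_reachableIn_flatMap_le (expand v) hd
    rw [flatMap_expand_map_append_cons v hnd, ← hsplit, flatMap_expand_range,
      if_pos (by omega), Nat.sub_add_cancel (by omega)] at h
    exact ⟨d', h, hd'⟩
end
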